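/- Let A• be a complex of R-modules whose cohomology modules are all S-torsion. If for every s ∈ S the complex T_s• ⊗_R A• is acyclic, where T_s• is the two-term complex R →(·s) R, then A• is acyclic. (Key ingredient: for any complex A• and s ∈ S there are natural short exact sequences 0 → H^{n-1}(A•)/s·H^{n-1}(A•) → H^n(T_s• ⊗_R A•) → {x ∈ H^n(A•) : sx = 0} → 0.) -/

import Mathlib

/-! If `s` kills the class of a cocycle `x`, say `s • x = d y`, then `(x, y)` is a cocycle of
`T_s• ⊗_R A•`; exactness there writes it as the image of some `(a, b)`, and the first
component reads `x = d a`. This is the surjection `H^n(T_s• ⊗_R A•) → H^n(A•)[s]` of the key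
exact sequence, and torsion of the cohomology does the rest. -/

/-- The degree-`n+1` differential of the complex `T_s• ⊗_R A•`, where `T_s•` is the
two-term complex `R →(·s) R` (in degrees 0 and 1) and `A•` is the complex with terms
`X n` and differentials `d n : X n → X (n+1)`.  The degree-`m` term of `T_s• ⊗ A•`
is `X m × X (m-1)`, and the differential sends `(x, y)` to `(d x, s•x - d y)`. -/
def coneD (R : Type) [CommRing R]
    (X : ℤ → Type) [∀ n, AddCommGroup (X n)] [∀ n, Module R (X n)]
    (d : ∀ n, X n →ₗ[R] X (n + 1)) (s : R) (n : ℤ) :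
    X (n + 1) × X n →ₗ[R] X (n + 1 + 1) × X (n + 1) :=
  LinearMap.prod
    ((d (n + 1)).comp (LinearMap.fst R (X (n + 1)) (X n)))
    (s • LinearMap.fst R (X (n + 1)) (X n) - (d n).comp (LinearMap.snd R (X (n + 1)) (X n)))

open LinearMap

section Cone

variable {R : Type} [CommRing R] {X : ℤ → Type} [∀ n, AddCommGroup (X n)] [∀ n, Module R (X n)]
  (d : ∀ n, X n →ₗ[R] X (n + 1))

@[simp]
theorem coneD_apply (s : R) (n : ℤ) (x : X (n + 1)) (y : X n) :
    coneD R X d s n (x, y) = (d (n + 1) x, s • x - d n y) :=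
  rfl

theorem mem_range_of_smul_mem_range_of_ker_coneD_le {s : R} {n : ℤ}
    (hexact : ker (coneD R X d s (n + 1)) ≤ range (coneD R X d s n))
    {x : X (n + 1 + 1)} (hx : x ∈ ker (d (n + 1 + 1))) (hsx : s • x ∈ range (d (n + 1))) :
    x ∈ range (d (n + 1)) := by
  obtain ⟨y, hy⟩ := hsx
  have hxy : (x, y) ∈ ker (coneD R X d s (n + 1)) := by
    rw [mem_ker] at hx ⊢
    simp [hx, hy]
  obtain ⟨⟨a, _⟩, hab⟩ := hexact hxy
  exact ⟨a, congrArg Prod.fst hab⟩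

end Cone

theorem acyclic_of_torsion_cohomology_and_cone_acyclic
    (R : Type) [CommRing R] (S : Submonoid R)
    (X : ℤ → Type) [∀ n, AddCommGroup (X n)] [∀ n, Module R (X n)]
    (d : ∀ n, X n →ₗ[R] X (n + 1))
    (hdd : ∀ n, (d (n + 1)).comp (d n) = 0)
    -- all cohomology modules of `A•` are S-torsion
    (htors : ∀ n, ∀ x ∈ LinearMap.ker (d (n + 1)),
      ∃ s : S, (s : R) • x ∈ LinearMap.range (d n))
    -- for every `s ∈ S`, the complex `T_s• ⊗_R A•` is acyclic
    (hcone : ∀ s : S, ∀ n : ℤ,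
      LinearMap.ker (coneD R X d (s : R) (n + 1)) = LinearMap.range (coneD R X d (s : R) n)) :
    ∀ n : ℤ, LinearMap.ker (d (n + 1)) = LinearMap.range (d n) := by
  intro n
  obtain ⟨m, rfl⟩ : ∃ m, n = m + 1 := ⟨n - 1, by omega⟩
  refine le_antisymm (fun x hx => ?_) (range_le_ker_iff.mpr (hdd _))
  obtain ⟨s, hs⟩ := htors (m + 1) x hx
  exact mem_range_of_smul_mem_range_of_ker_coneD_le d (hcone s m).le hx hs
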